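/- arXiv:2202.08864 — 2 statements merged into one kernel-verified Lean document; each statement's English description precedes it below -/
import Mathlib

section
/- Let p(t) = sum_{i=0}^{2m} b_i t^i with real coefficients satisfying b_0 = b_{2m} = 1, b_1 = b_{2m-1} = 0, and m ≥ 4. Then in q(t) = (1/2) p(t)^2 + (1/2) p(t^2) − (1 + t^{2m}) p(t), the coefficients of t^{4m}, t^{4m-1}, t^{4m-2}, t^{4m-3} all vanish, and the coefficient of t^{4m-4} equals b_{2m-2}^2/2 + b_{2m-2}/2. -/
/-!
Near the top degree `4m`, the coefficients of `p²` are convolutions of the top coefficients of `p`,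
`p(t²)` contributes `b_{2m - k/2}` at even codegree `k` only, and `(1 + t^{2m}) p` contributes `b_{2m-k}`.
With `b_{2m} = 1` and `b_{2m-1} = 0`, the cross terms `b_{2m} b_{2m-k}` of `p²/2` cancel the last
contribution, which leaves `b_{2m-2}²/2 + b_{2m-2}/2` at codegree `4` and nothing above.
-/

open Polynomial Finset

theorem coeff_mul_add_sub_of_natDegree_le {R : Type*} [Semiring R] {f g : R[X]} {d e k : ℕ}
    (hf : f.natDegree ≤ d) (hg : g.natDegree ≤ e) (hkd : k ≤ d) (hke : k ≤ e) :
    (f * g).coeff (d + e - k) = ∑ x ∈ antidiagonal k, f.coeff (d - x.1) * g.coeff (e - x.2) := by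
  rw [coeff_mul]
  symm
  refine sum_of_injOn (fun x => (d - x.1, e - x.2)) ?_ ?_ ?_ (fun _ _ => rfl)
  · rintro ⟨a, b⟩ hab ⟨a', b'⟩ hab' h
    simp only [mem_coe, HasAntidiagonal.mem_antidiagonal, Prod.mk.injEq] at hab hab' h ⊢
    omega
  · rintro ⟨a, b⟩ hab
    simp only [mem_coe, HasAntidiagonal.mem_antidiagonal] at hab ⊢
    omega
  · rintro ⟨i, j⟩ hij hnot
    rw [HasAntidiagonal.mem_antidiagonal] at hij
    rcases lt_or_ge d i with hi | hi
    · rw [coeff_eq_zero_of_natDegree_lt (hf.trans_lt hi), zero_mul]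
    rcases lt_or_ge e j with hj | hj
    · rw [coeff_eq_zero_of_natDegree_lt (hg.trans_lt hj), mul_zero]
    exact absurd ⟨(d - i, e - j), by simp only [mem_coe, HasAntidiagonal.mem_antidiagonal]; omega,
      by simp only [Prod.mk.injEq]; omega⟩ hnot

/-- When `p` is the Poincaré polynomial of a space with cohomology in even degrees only,
`½ p(t)² + ½ p(t²)` is the Poincaré polynomial of its symmetric square. -/
noncomputable def symSqDefect (m : ℕ) (p : ℝ[X]) : ℝ[X] :=
  C (1/2 : ℝ) * p ^ 2 + C (1/2 : ℝ) * p.comp (X ^ 2) - (1 + X ^ (2 * m)) * p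

section
variable {m k : ℕ} {p : ℝ[X]}

theorem coeff_symSqDefect_sub (hp : p.natDegree ≤ 2 * m) (hk : k < 2 * m) :
    (symSqDefect m p).coeff (4 * m - k) =
      (∑ x ∈ antidiagonal k, p.coeff (2 * m - x.1) * p.coeff (2 * m - x.2)) / 2
        + (p.comp (X ^ 2)).coeff (4 * m - k) / 2 - p.coeff (2 * m - k) := by
  have hsq : (p ^ 2).coeff (4 * m - k) =
      ∑ x ∈ antidiagonal k, p.coeff (2 * m - x.1) * p.coeff (2 * m - x.2) := by
    rw [sq, show 4 * m - k = 2 * m + 2 * m - k by omega]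
    exact coeff_mul_add_sub_of_natDegree_le hp hp hk.le hk.le
  have hhigh : p.coeff (4 * m - k) = 0 := coeff_eq_zero_of_natDegree_lt (by omega)
  rw [symSqDefect, show 4 * m - k = 2 * m - k + 2 * m by omega, coeff_sub, coeff_add, coeff_C_mul, coeff_C_mul, add_mul, one_mul, coeff_add, coeff_X_pow_mul,
    show 2 * m - k + 2 * m = 4 * m - k by omega, hsq, hhigh]
  ring

theorem coeff_comp_X_sq_two_mul (n : ℕ) : (p.comp (X ^ 2)).coeff (2 * n) = p.coeff n :=
  coeff_expand_mul' two_pos p n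

theorem coeff_comp_X_sq_two_mul_add_one (n : ℕ) : (p.comp (X ^ 2)).coeff (2 * n + 1) = 0 := by
  rw [← expand_eq_comp_X_pow, coeff_expand two_pos, if_neg (by omega)]

end

theorem stmt_3_general (m : ℕ) (hm : 4 ≤ m) (p : Polynomial ℝ)
    (hdeg : p.natDegree ≤ 2 * m)
    (htop : p.coeff (2 * m) = 1)
    (hb2m1 : p.coeff (2 * m - 1) = 0) :
    let q := C (1/2 : ℝ) * p ^ 2 + C (1/2 : ℝ) * p.comp (X ^ 2)
      - (1 + X ^ (2 * m)) * p
    q.coeff (4 * m) = 0 ∧ q.coeff (4 * m - 1) = 0 ∧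
    q.coeff (4 * m - 2) = 0 ∧ q.coeff (4 * m - 3) = 0 ∧
    q.coeff (4 * m - 4) = (p.coeff (2 * m - 2)) ^ 2 / 2 + (p.coeff (2 * m - 2)) / 2 := by
  intro q
  have hq (k : ℕ) (hk : k < 2 * m) : q.coeff (4 * m - k) = _ := coeff_symSqDefect_sub hdeg hk
  have e0 : (p.comp (X ^ 2)).coeff (4 * m) = 1 := by
    rw [show 4 * m = 2 * (2 * m) by ring, coeff_comp_X_sq_two_mul, htop]
  have e1 : (p.comp (X ^ 2)).coeff (4 * m - 1) = 0 := by
    rw [show 4 * m - 1 = 2 * (2 * m - 1) + 1 by omega, coeff_comp_X_sq_two_mul_add_one]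
  have e2 : (p.comp (X ^ 2)).coeff (4 * m - 2) = 0 := by
    rw [show 4 * m - 2 = 2 * (2 * m - 1) by omega, coeff_comp_X_sq_two_mul, hb2m1]
  have e3 : (p.comp (X ^ 2)).coeff (4 * m - 3) = 0 := by
    rw [show 4 * m - 3 = 2 * (2 * m - 2) + 1 by omega, coeff_comp_X_sq_two_mul_add_one]
  have e4 : (p.comp (X ^ 2)).coeff (4 * m - 4) = p.coeff (2 * m - 2) := by
    rw [show 4 * m - 4 = 2 * (2 * m - 2) by omega, coeff_comp_X_sq_two_mul]
  have h0 := hq 0 (by omega)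
  have h1 := hq 1 (by omega)
  have h2 := hq 2 (by omega)
  have h3 := hq 3 (by omega)
  have h4 := hq 4 (by omega)
  simp only [Nat.sum_antidiagonal_succ, HasAntidiagonal.antidiagonal_zero, sum_singleton, zero_add,
    Nat.reduceAdd, Nat.sub_zero, htop, hb2m1, e0, e1, e2, e3, e4] at h0 h1 h2 h3 h4
  exact ⟨by linear_combination h0, by linear_combination h1, by linear_combination h2,
    by linear_combination h3, by linear_combination h4⟩

theorem stmt_3 (m : ℕ) (hm : 4 ≤ m) (p : Polynomial ℝ)
    (hdeg : p.natDegree ≤ 2 * m)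
    (hb0 : p.coeff 0 = 1) (htop : p.coeff (2 * m) = 1)
    (hb1 : p.coeff 1 = 0) (hb2m1 : p.coeff (2 * m - 1) = 0) :
    let q := C (1/2 : ℝ) * p ^ 2 + C (1/2 : ℝ) * p.comp (X ^ 2)
      - (1 + X ^ (2 * m)) * p
    q.coeff (4 * m) = 0 ∧ q.coeff (4 * m - 1) = 0 ∧
    q.coeff (4 * m - 2) = 0 ∧ q.coeff (4 * m - 3) = 0 ∧
    q.coeff (4 * m - 4) = (p.coeff (2 * m - 2)) ^ 2 / 2 + (p.coeff (2 * m - 2)) / 2 :=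
  stmt_3_general m hm p hdeg htop hb2m1
end

section
/- Let p(t) = sum_{i=0}^{2m} b_i t^i satisfy Poincaré duality b_i = b_{2m-i}, with b_0 = 1, b_1 = 0, b_2 ≥ 1, all b_i ≥ 0, and m ≥ 4. Suppose (1/2) p(t)^2 + (1/2) p(t^2) − (1 + t^{2m}) p(t) = t^4 g(t) for some polynomial g with nonnegative coefficients. Then deg g = 4m − 8. -/
open Polynomial Finset

theorem stmt_4 (m : ℕ) (hm : 4 ≤ m) (p g : Polynomial ℝ)
    (hdeg : p.natDegree ≤ 2 * m)
    (hdual : ∀ i ≤ 2 * m, p.coeff i = p.coeff (2 * m - i))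
    (hb0 : p.coeff 0 = 1) (hb1 : p.coeff 1 = 0) (hb2 : 1 ≤ p.coeff 2)
    (hpos : ∀ i, 0 ≤ p.coeff i)
    (hgpos : ∀ i, 0 ≤ g.coeff i)
    (heq : C (1/2 : ℝ) * p ^ 2 + C (1/2 : ℝ) * p.comp (X ^ 2)
      - (1 + X ^ (2 * m)) * p = X ^ 4 * g) :
    g.natDegree = 4 * m - 8 := by
  set L : Polynomial ℝ := C (1/2 : ℝ) * p ^ 2 + C (1/2 : ℝ) * p.comp (X ^ 2)
      - (1 + X ^ (2 * m)) * p with hL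
  -- vanishing above degree 2m
  have hz : ∀ n, 2 * m < n → p.coeff n = 0 := fun n hn =>
    coeff_eq_zero_of_natDegree_lt (lt_of_le_of_lt hdeg hn)
  -- dual values
  have e0 : p.coeff (2 * m) = 1 := by
    rw [hdual (2 * m) le_rfl, Nat.sub_self, hb0]
  have e1 : p.coeff (2 * m - 1) = 0 := by
    rw [hdual (2 * m - 1) (by omega), show 2 * m - (2 * m - 1) = 1 from by omega, hb1]
  have e2 : p.coeff (2 * m - 2) = p.coeff 2 := (hdual 2 (by omega)).symm
  have e3 : p.coeff (2 * m - 3) = p.coeff 3 := (hdual 3 (by omega)).symm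
  have e4 : p.coeff (2 * m - 4) = p.coeff 4 := (hdual 4 (by omega)).symm
  -- product coefficients
  have hsq : ∀ n, 2 * m ≤ n → n ≤ 4 * m →
      (p * p).coeff n = ∑ j ∈ Finset.range (4 * m + 1 - n),
        p.coeff (4 * m - n - j) * p.coeff (2 * m - j) := by
    intro n h1 h2
    rw [coeff_mul, Finset.Nat.sum_antidiagonal_eq_sum_range_succ_mk]
    have hsub : (∑ i ∈ Finset.range (n + 1), p.coeff i * p.coeff (n - i)) =
        ∑ i ∈ Finset.Ico (n - 2 * m) (2 * m + 1), p.coeff i * p.coeff (n - i) := by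
      symm
      apply Finset.sum_subset
      · intro i hi
        simp only [Finset.mem_Ico] at hi
        simp only [Finset.mem_range]; omega
      · intro i hi hni
        simp only [Finset.mem_range] at hi
        simp only [Finset.mem_Ico, not_and_or, not_le, not_lt] at hni
        rcases hni with hc | hc
        · rw [hz (n - i) (by omega), mul_zero]
        · rw [hz i (by omega), zero_mul]
    rw [hsub, Finset.sum_Ico_eq_sum_range,
      show 2 * m + 1 - (n - 2 * m) = 4 * m + 1 - n from by omega]
    apply Finset.sum_congr rfl
    intro j hj
    simp only [Finset.mem_range] at hj
    rw [hdual (n - 2 * m + j) (by omega),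
      show 2 * m - (n - 2 * m + j) = 4 * m - n - j from by omega,
      show n - (n - 2 * m + j) = 2 * m - j from by omega]
  -- comp coefficients
  have hcomp : ∀ n, (p.comp (X ^ 2)).coeff n =
      if 2 ∣ n then p.coeff (n / 2) else 0 := by
    intro n
    rw [← Polynomial.expand_eq_comp_X_pow, Polynomial.coeff_expand (by norm_num : 0 < 2)]
  -- LHS coefficient decomposition
  have hLc : ∀ n, 2 * m ≤ n → L.coeff n =
      (1/2) * (p * p).coeff n + (1/2) * (p.comp (X ^ 2)).coeff n
        - (p.coeff n + p.coeff (n - 2 * m)) := by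
    intro n hn
    have hx : (X ^ (2 * m) * p).coeff n = p.coeff (n - 2 * m) := by
      conv_lhs => rw [show n = (n - 2 * m) + 2 * m from by omega]
      exact coeff_X_pow_mul p (2 * m) (n - 2 * m)
    rw [hL, coeff_sub, coeff_add, coeff_C_mul, coeff_C_mul, sq, add_mul, one_mul,
      coeff_add, hx]
  -- high coefficients vanish
  have hhigh : ∀ n, 4 * m < n → L.coeff n = 0 := by
    intro n hn
    rw [hL, coeff_sub, coeff_add, coeff_C_mul, coeff_C_mul]
    rw [coeff_eq_zero_of_natDegree_lt (lt_of_le_of_lt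
        ((natDegree_pow_le).trans (by omega : 2 * p.natDegree ≤ 4 * m)) hn),
      coeff_eq_zero_of_natDegree_lt (lt_of_le_of_lt
        ((natDegree_comp_le).trans ?_) hn),
      coeff_eq_zero_of_natDegree_lt (lt_of_le_of_lt
        ((natDegree_mul_le).trans ?_) hn)]
    · ring
    · calc (1 + X ^ (2 * m) : Polynomial ℝ).natDegree + p.natDegree
          ≤ 2 * m + 2 * m := by
            apply Nat.add_le_add _ hdeg
            exact (natDegree_add_le _ _).trans (by simp [natDegree_X_pow])
        _ ≤ 4 * m := by omega
    · calc p.natDegree * (X ^ 2 : Polynomial ℝ).natDegree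
          ≤ 2 * m * 2 := by
            apply Nat.mul_le_mul hdeg
            simp [natDegree_X_pow]
        _ ≤ 4 * m := by omega
  -- coefficients of g
  have hgc : ∀ k, g.coeff k = L.coeff (k + 4) := by
    intro k
    rw [heq, coeff_X_pow_mul]
  -- the four key coefficients of L
  have h4 : L.coeff (4 * m - 4) = (p.coeff 2 ^ 2 + p.coeff 2) / 2 := by
    rw [hLc _ (by omega), hsq _ (by omega) (by omega), hcomp,
      if_pos (by omega : 2 ∣ (4 * m - 4)),
      show (4 * m - 4) / 2 = 2 * m - 2 from by omega,
      show 4 * m + 1 - (4 * m - 4) = 5 from by omega,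
      show 4 * m - (4 * m - 4) = 4 from by omega,
      show (4 * m - 4) - 2 * m = 2 * m - 4 from by omega]
    simp only [Finset.sum_range_succ, Finset.sum_range_zero]
    norm_num
    rw [hz (4 * m - 4) (by omega), e0, e1, e2, e3, e4, hb1, hb0]
    ring
  have h3 : L.coeff (4 * m - 3) = 0 := by
    rw [hLc _ (by omega), hsq _ (by omega) (by omega), hcomp,
      if_neg (by omega : ¬ 2 ∣ (4 * m - 3)),
      show 4 * m + 1 - (4 * m - 3) = 4 from by omega,
      show 4 * m - (4 * m - 3) = 3 from by omega,
      show (4 * m - 3) - 2 * m = 2 * m - 3 from by omega]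
    simp only [Finset.sum_range_succ, Finset.sum_range_zero]
    norm_num
    rw [hz (4 * m - 3) (by omega), e0, e1, e2, e3, hb1, hb0]
    ring
  have h2 : L.coeff (4 * m - 2) = 0 := by
    rw [hLc _ (by omega), hsq _ (by omega) (by omega), hcomp,
      if_pos (by omega : 2 ∣ (4 * m - 2)),
      show (4 * m - 2) / 2 = 2 * m - 1 from by omega,
      show 4 * m + 1 - (4 * m - 2) = 3 from by omega,
      show 4 * m - (4 * m - 2) = 2 from by omega,
      show (4 * m - 2) - 2 * m = 2 * m - 2 from by omega]
    simp only [Finset.sum_range_succ, Finset.sum_range_zero]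
    norm_num
    rw [hz (4 * m - 2) (by omega), e0, e1, e2, hb1, hb0]
    ring
  have h1 : L.coeff (4 * m - 1) = 0 := by
    rw [hLc _ (by omega), hsq _ (by omega) (by omega), hcomp,
      if_neg (by omega : ¬ 2 ∣ (4 * m - 1)),
      show 4 * m + 1 - (4 * m - 1) = 2 from by omega,
      show 4 * m - (4 * m - 1) = 1 from by omega,
      show (4 * m - 1) - 2 * m = 2 * m - 1 from by omega]
    simp only [Finset.sum_range_succ, Finset.sum_range_zero]
    norm_num
    rw [hz (4 * m - 1) (by omega), e0, e1, hb1, hb0]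
    ring
  have h0 : L.coeff (4 * m) = 0 := by
    rw [hLc _ (by omega), hsq _ (by omega) (by omega), hcomp,
      if_pos (by omega : 2 ∣ (4 * m)),
      show (4 * m) / 2 = 2 * m from by omega,
      show 4 * m + 1 - 4 * m = 1 from by omega,
      show 4 * m - 4 * m = 0 from by omega,
      show 4 * m - 2 * m = 2 * m from by omega]
    simp only [Finset.sum_range_succ, Finset.sum_range_zero]
    norm_num
    rw [hz (4 * m) (by omega), e0, hb0]
    ring
  -- conclude
  have hne : g.coeff (4 * m - 8) ≠ 0 := by
    rw [hgc, show 4 * m - 8 + 4 = 4 * m - 4 from by omega, h4]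
    have := hpos 2
    nlinarith
  have hle : g.natDegree ≤ 4 * m - 8 := by
    rw [natDegree_le_iff_coeff_eq_zero]
    intro N hN
    rw [hgc]
    have : N + 4 = 4 * m - 3 ∨ N + 4 = 4 * m - 2 ∨ N + 4 = 4 * m - 1 ∨
        N + 4 = 4 * m ∨ 4 * m < N + 4 := by omega
    rcases this with h | h | h | h | h
    · rw [h]; exact h3
    · rw [h]; exact h2
    · rw [h]; exact h1
    · rw [h]; exact h0
    · exact hhigh _ h
  exact le_antisymm hle (le_natDegree_of_ne_zero hne)
end
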